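/- With the representation as above, the relations [l↑, v^±] = ∓η v^± and [l↓, v^±] = ∓η v^± hold. -/
import Mathlib


/-- The auxiliary space: (coefficient functions of) formal combinations of
basis vectors `|j,k,l⟩`, `j,k,l ∈ ℤ≥0`. -/
abbrev Aux := (ℕ × ℕ × ℕ) → ℂ

/-- A weighted-shift operator on the auxiliary space:
`(shiftOp σ w f) p = w p * f (σ p)`. -/
noncomputable def shiftOp (σ : ℕ × ℕ × ℕ → ℕ × ℕ × ℕ) (w : ℕ × ℕ × ℕ → ℂ) :
    Module.End ℂ Aux where
  toFun f := fun p => w p * f (σ p)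
  map_add' f g := by funext p; simp [mul_add]
  map_smul' c f := by funext p; simp [smul_eq_mul]; ring

/-- Bosonic annihilation operator `b↑`: `b↑|j,k,l⟩ = √j |j−1,k,l⟩`. -/
noncomputable def bUp : Module.End ℂ Aux :=
  shiftOp (fun p => (p.1 + 1, p.2.1, p.2.2)) (fun p => (Real.sqrt (p.1 + 1) : ℂ))

/-- Bosonic creation operator `b↑†`: `b↑†|j,k,l⟩ = √(j+1) |j+1,k,l⟩`. -/
noncomputable def bUpDag : Module.End ℂ Aux :=
  shiftOp (fun p => (p.1 - 1, p.2.1, p.2.2)) (fun p => (Real.sqrt p.1 : ℂ))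

/-- Bosonic annihilation operator `b↓`. -/
noncomputable def bDown : Module.End ℂ Aux :=
  shiftOp (fun p => (p.1, p.2.1 + 1, p.2.2)) (fun p => (Real.sqrt (p.2.1 + 1) : ℂ))

/-- Bosonic creation operator `b↓†`. -/
noncomputable def bDownDag : Module.End ℂ Aux :=
  shiftOp (fun p => (p.1, p.2.1 - 1, p.2.2)) (fun p => (Real.sqrt p.2.1 : ℂ))

/-- Complex-spin raising operator: `s⁺|j,k,l⟩ = l |j,k,l−1⟩`. -/
noncomputable def sPlus : Module.End ℂ Aux :=
  shiftOp (fun p => (p.1, p.2.1, p.2.2 + 1)) (fun p => ((p.2.2 : ℂ) + 1))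

/-- Complex-spin lowering operator with parameter `pp`:
`s⁻|j,k,l⟩ = (2p−l) |j,k,l+1⟩`. -/
noncomputable def sMinus (pp : ℂ) : Module.End ℂ Aux :=
  shiftOp (fun p => (p.1, p.2.1, p.2.2 - 1))
    (fun p => if p.2.2 = 0 then 0 else 2 * pp - ((p.2.2 - 1 : ℕ) : ℂ))

/-- Complex-spin `z`-operator: `s^z|j,k,l⟩ = (p−l) |j,k,l⟩`. -/
noncomputable def sZ (pp : ℂ) : Module.End ℂ Aux :=
  shiftOp id (fun p => pp - (p.2.2 : ℂ))

/-- `t⁺ = b↑`. -/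
noncomputable def tP : Module.End ℂ Aux := bUp
/-- `t⁻ = η b↑†`. -/
noncomputable def tM (η : ℂ) : Module.End ℂ Aux := η • bUpDag
/-- `u⁺ = η b↓`. -/
noncomputable def uP (η : ℂ) : Module.End ℂ Aux := η • bDown
/-- `u⁻ = b↓†`. -/
noncomputable def uM : Module.End ℂ Aux := bDownDag
/-- `v⁺ = η (b↑ b↓ + s⁺)`. -/
noncomputable def vP (η : ℂ) : Module.End ℂ Aux := η • (bUp * bDown + sPlus)
/-- `v⁻ = η (b↑† b↓† − s⁻)`. -/
noncomputable def vM (η pp : ℂ) : Module.End ℂ Aux := η • (bUpDag * bDownDag - sMinus pp)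
/-- `l↑ = η (b↑† b↑ + 1/2 − s^z)`. -/
noncomputable def lUp (η pp : ℂ) : Module.End ℂ Aux :=
  η • (bUpDag * bUp + (1 / 2 : ℂ) • (1 : Module.End ℂ Aux) - sZ pp)
/-- `l↓ = η (b↓† b↓ + 1/2 − s^z)`. -/
noncomputable def lDown (η pp : ℂ) : Module.End ℂ Aux :=
  η • (bDownDag * bDown + (1 / 2 : ℂ) • (1 : Module.End ℂ Aux) - sZ pp)

lemma shiftOp_apply (σ : ℕ × ℕ × ℕ → ℕ × ℕ × ℕ) (w : ℕ × ℕ × ℕ → ℂ) (f : Aux) (p : ℕ × ℕ × ℕ) :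
    shiftOp σ w f p = w p * f (σ p) := rfl

lemma pow2' (x : ℝ) (hx : 0 ≤ x) : ((Real.sqrt x : ℝ) : ℂ) ^ 2 = x := by
  rw [sq, ← Complex.ofReal_mul, Real.mul_self_sqrt hx]

lemma pow3' (x : ℝ) (hx : 0 ≤ x) : ((Real.sqrt x : ℝ) : ℂ) ^ 3 = x * (Real.sqrt x : ℝ) := by
  rw [pow_succ, pow2' x hx]

lemma pow4' (x : ℝ) (hx : 0 ≤ x) : ((Real.sqrt x : ℝ) : ℂ) ^ 4 = (x : ℂ) ^ 2 := by
  rw [show (4:ℕ) = 2*2 by rfl, pow_mul, pow2' x hx, ← Complex.ofReal_pow]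

set_option maxHeartbeats 4000000 in
/-- `[l↑, v^±] = ∓η v^±` and `[l↓, v^±] = ∓η v^±`. -/
theorem lv_relations (η pp : ℂ) :
    lUp η pp * vP η - vP η * lUp η pp = -η • vP η ∧
    lUp η pp * vM η pp - vM η pp * lUp η pp = η • vM η pp ∧
    lDown η pp * vP η - vP η * lDown η pp = -η • vP η ∧
    lDown η pp * vM η pp - vM η pp * lDown η pp = η • vM η pp := by
  refine ⟨?_, ?_, ?_, ?_⟩ <;>
  · ext f p
    obtain ⟨j, k, l⟩ := p
    simp only [lUp, lDown, vP, vM, bUp, bUpDag, bDown, bDownDag, sPlus, sMinus, sZ,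
      Module.End.mul_apply, LinearMap.sub_apply, LinearMap.add_apply, LinearMap.smul_apply,
      Module.End.one_apply, shiftOp_apply, Pi.smul_apply, Pi.sub_apply, Pi.add_apply,
      smul_eq_mul, neg_smul, LinearMap.neg_apply, Pi.neg_apply, id]
    obtain _ | (_ | j) := j <;> obtain _ | (_ | k) := k <;> obtain _ | l := l <;>
      simp [Real.sqrt_one] <;> push_cast <;> ring_nf <;>
      simp (disch := positivity) only [pow2', pow3', pow4'] <;> push_cast <;> ring_nf
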